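/- arXiv:1611.09148 — 6 statements merged into one kernel-verified Lean document; each statement's English description precedes it below -/
import Mathlib

section
/- Let (f : A → B, s : B → A) be a Schreier split epimorphism of monoids with Schreier retraction q. Define φ : B → (ker f → ker f) by φ(b)(x) = q(s(b) + x). Then for each b ∈ B, φ(b) is a monoid endomorphism of ker f, and φ : B → End(ker f) is a monoid homomorphism (where End(ker f) has composition as multiplication and the identity as unit). -/
/-! For `x ∈ ker f` we have `f (s b + x) = b`, so the Schreier decomposition of `s b + x` reads
`s b + x = q (s b + x) + s b`: the section `s b` can be moved to the right past a kernel element at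
the price of acting on it. Moving `s b` (resp. `s b₂`, then `s b₁`) through sums in this way
produces a decomposition `α + s (f a)` with `α ∈ ker f`, and uniqueness identifies `α` with `q a`. -/

section SchreierRetraction

variable {A B : Type*} [AddMonoid A] [AddMonoid B] {f : A →+ B} {s : B →+ A} {q : A → A}

theorem section_add_eq_retraction_add_section (hfs : ∀ b : B, f (s b) = b)
    (hq : ∀ a : A, a = q a + s (f a)) (b : B) {x : A} (hx : f x = 0) :
    s b + x = q (s b + x) + s b := by
  have h := hq (s b + x)
  rwa [map_add, hfs, hx, add_zero] at h

theorem retraction_section_add_zero (hfs : ∀ b : B, f (s b) = b)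
    (huniq : ∀ a α : A, f α = 0 → a = α + s (f a) → α = q a) (b : B) :
    q (s b + 0) = 0 :=
  (huniq _ 0 (map_zero f) (by rw [add_zero, zero_add, hfs])).symm

theorem retraction_section_add_add (hfs : ∀ b : B, f (s b) = b) (hq0 : ∀ a : A, f (q a) = 0)
    (hq : ∀ a : A, a = q a + s (f a))
    (huniq : ∀ a α : A, f α = 0 → a = α + s (f a) → α = q a) (b : B) {x y : A}
    (hx : f x = 0) (hy : f y = 0) :
    q (s b + (x + y)) = q (s b + x) + q (s b + y) := by
  refine (huniq _ _ (by rw [map_add, hq0, hq0, add_zero]) ?_).symm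
  calc s b + (x + y)
      = (s b + x) + y := (add_assoc _ _ _).symm
    _ = q (s b + x) + (s b + y) := by
        rw [← add_assoc, ← section_add_eq_retraction_add_section hfs hq b hx]
    _ = (q (s b + x) + q (s b + y)) + s b := by
        rw [add_assoc, ← section_add_eq_retraction_add_section hfs hq b hy]
    _ = _ := by rw [map_add f, hfs, map_add f, hx, hy, add_zero, add_zero]

theorem retraction_section_zero_add
    (huniq : ∀ a α : A, f α = 0 → a = α + s (f a) → α = q a) {x : A} (hx : f x = 0) :
    q (s 0 + x) = x := by
  rw [map_zero, zero_add]
  exact (huniq x x hx (by rw [hx, map_zero, add_zero])).symm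

theorem retraction_section_add_comp (hfs : ∀ b : B, f (s b) = b) (hq0 : ∀ a : A, f (q a) = 0)
    (hq : ∀ a : A, a = q a + s (f a))
    (huniq : ∀ a α : A, f α = 0 → a = α + s (f a) → α = q a) (b₁ b₂ : B) {x : A}
    (hx : f x = 0) :
    q (s (b₁ + b₂) + x) = q (s b₁ + q (s b₂ + x)) := by
  refine (huniq _ _ (hq0 _) ?_).symm
  calc s (b₁ + b₂) + x
      = s b₁ + (s b₂ + x) := by rw [map_add s, add_assoc]
    _ = (s b₁ + q (s b₂ + x)) + s b₂ := by
        rw [add_assoc, ← section_add_eq_retraction_add_section hfs hq b₂ hx]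
    _ = q (s b₁ + q (s b₂ + x)) + s (b₁ + b₂) := by
        rw [map_add s, ← add_assoc, ← section_add_eq_retraction_add_section hfs hq b₁ (hq0 _)]
    _ = _ := by rw [map_add f, hfs, hx, add_zero]

end SchreierRetraction

/-- for a Schreier split epimorphism of monoids, `φ b x = q (s b + x)`
defines, for each `b`, a monoid endomorphism of `ker f`, and `φ : B → End (ker f)` is a
monoid homomorphism (composition as multiplication, identity as unit). -/
theorem schreier_action_is_monoid_hom_into_End
    {A B : Type*} [AddMonoid A] [AddMonoid B]
    (f : A →+ B) (s : B →+ A) (hfs : ∀ b : B, f (s b) = b)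
    (q : A → A)
    (hq0 : ∀ a : A, f (q a) = 0)
    (hq : ∀ a : A, a = q a + s (f a))
    (huniq : ∀ a α : A, f α = 0 → a = α + s (f a) → α = q a) :
    -- φ b maps ker f to ker f
    (∀ b : B, ∀ x : A, f x = 0 → f (q (s b + x)) = 0) ∧
    -- φ b is a monoid endomorphism of ker f
    (∀ b : B, q (s b + 0) = 0) ∧
    (∀ b : B, ∀ x y : A, f x = 0 → f y = 0 →
      q (s b + (x + y)) = q (s b + x) + q (s b + y)) ∧
    -- φ is a monoid homomorphism B → End(ker f)
    (∀ x : A, f x = 0 → q (s 0 + x) = x) ∧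
    (∀ b₁ b₂ : B, ∀ x : A, f x = 0 →
      q (s (b₁ + b₂) + x) = q (s b₁ + q (s b₂ + x))) :=
  ⟨fun _ _ _ => hq0 _,
    retraction_section_add_zero hfs huniq,
    fun b _ _ hx hy => retraction_section_add_add hfs hq0 hq huniq b hx hy,
    fun _ hx => retraction_section_zero_add huniq hx,
    fun b₁ b₂ _ hx => retraction_section_add_comp hfs hq0 hq huniq b₁ b₂ hx⟩
end

section
/- Schreier split epimorphisms of monoids are stable under pullback: if (f : A → B, s : B → A) is a Schreier split epimorphism and h : E → B is any monoid homomorphism, then the pullback projection A ×_B E → E with its induced section e ↦ (s(h(e)), e) is again a Schreier split epimorphism. -/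
/-!
In the pullback the kernel of the projection to `E` consists of the pairs `(α, 0)` with `f α = 0`,
and a pair `(a, e)` satisfies `f a = h e`. Hence the Schreier decomposition `a = α + s (f a)` in `A`
yields `(a, e) = (α, 0) + (s (h e), e)`, and any other such decomposition of `(a, e)` restricts to
one of `a`, so uniqueness is inherited from `A`.
-/

namespace AddMonoidHom

variable {A B E : Type*} [AddMonoid A] [AddMonoid B] [AddMonoid E]

def IsSchreier (f : A →+ B) (s : B →+ A) : Prop :=
  ∀ a, ∃! α, f α = 0 ∧ a = α + s (f a)

def pullback (f : A →+ B) (h : E →+ B) : AddSubmonoid (A × E) where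
  carrier := {p | f p.1 = h p.2}
  add_mem' {p q} (hp : f p.1 = h p.2) (hq : f q.1 = h q.2) :=
    show f (p.1 + q.1) = h (p.2 + q.2) by rw [map_add, map_add, hp, hq]
  zero_mem' := show f 0 = h 0 by rw [map_zero, map_zero]

theorem mem_pullback {f : A →+ B} {h : E →+ B} {p : A × E} :
    p ∈ pullback f h ↔ f p.1 = h p.2 :=
  Iff.rfl

def pullbackSnd (f : A →+ B) (h : E →+ B) : pullback f h →+ E :=
  (snd A E).comp (pullback f h).subtype

def pullbackSection {f : A →+ B} {s : B →+ A} (hfs : Function.LeftInverse f s) (h : E →+ B) :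
    E →+ pullback f h :=
  ((s.comp h).prod (id E)).codRestrict _ fun e => hfs (h e)

@[simp]
theorem pullbackSnd_apply (f : A →+ B) (h : E →+ B) (p : pullback f h) :
    pullbackSnd f h p = p.1.2 :=
  rfl

@[simp]
theorem coe_pullbackSection {f : A →+ B} {s : B →+ A} (hfs : Function.LeftInverse f s)
    (h : E →+ B) (e : E) : (pullbackSection hfs h e : A × E) = (s (h e), e) :=
  rfl

theorem IsSchreier.pullback {f : A →+ B} {s : B →+ A} (hfs : Function.LeftInverse f s)
    (hS : IsSchreier f s) (h : E →+ B) : IsSchreier (pullbackSnd f h) (pullbackSection hfs h) := by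
  rintro ⟨⟨a, e⟩, hae : f a = h e⟩
  obtain ⟨α, ⟨hα, ha⟩, huniq⟩ := hS a
  have hα_mem : (α, (0 : E)) ∈ AddMonoidHom.pullback f h := by
    rw [mem_pullback, hα, map_zero]
  refine ⟨⟨(α, 0), hα_mem⟩, ⟨rfl, ?_⟩, ?_⟩
  · ext
    · simpa [← hae] using ha
    · simp
  · rintro ⟨⟨β, e'⟩, hβ : f β = h e'⟩ ⟨he' : e' = 0, hdecomp⟩
    subst he'
    have hβ0 : f β = 0 := hβ.trans h.map_zero
    obtain rfl : β = α := huniq β ⟨hβ0, by simpa [hae] using congrArg (·.1.1) hdecomp⟩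
    rfl

end AddMonoidHom

/-- Schreier split epimorphisms of monoids are stable under pullback:
the pullback `A ×_B E → E` of a Schreier split epimorphism `(f, s)` along any
`h : E → B`, with the induced section `e ↦ (s (h e), e)`, is again Schreier. -/
theorem schreier_stable_under_pullback
    {A B E : Type*} [AddMonoid A] [AddMonoid B] [AddMonoid E]
    (f : A →+ B) (s : B →+ A) (hfs : ∀ b : B, f (s b) = b)
    (hSch : ∀ a : A, ∃! α : A, f α = 0 ∧ a = α + s (f a))
    (h : E →+ B) :
    -- the induced section lands in the pullback
    (∀ e : E, f (s (h e)) = h e) ∧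
    -- the pullback projection with its induced section is a Schreier split epimorphism:
    -- its kernel consists of the elements (α, 0) of the pullback with f α = 0
    (∀ u : {p : A × E // f p.1 = h p.2},
      ∃! v : {p : A × E // f p.1 = h p.2},
        v.val.2 = 0 ∧ u.val = (v.val.1 + s (h u.val.2), v.val.2 + u.val.2)) := by
  refine ⟨fun e => hfs (h e), fun u => ?_⟩
  exact (existsUnique_congr fun v => and_congr_right fun _ => Subtype.ext_iff).mp
    (AddMonoidHom.IsSchreier.pullback hfs hSch h u)
end

section
/- Every Schreier split epimorphism of monoids is a strong point: if (f : A → B, s : B → A) is a Schreier split epimorphism with kernel inclusion k : ker f → A, then k and s are jointly strongly epimorphic, i.e., the only submonoid of A containing both the image of k and the image of s is A itself. -/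
theorem AddMonoidHom.mker_sup_mrange_eq_top {A B : Type*} [AddMonoid A] [AddMonoid B]
    (f : A →+ B) (s : B →+ A) (h : ∀ a : A, ∃ α : A, f α = 0 ∧ a = α + s (f a)) :
    AddMonoidHom.mker f ⊔ AddMonoidHom.mrange s = ⊤ := by
  refine (AddSubmonoid.eq_top_iff' _).mpr fun a => ?_
  obtain ⟨α, hα, ha⟩ := h a
  rw [ha]
  exact AddSubmonoid.add_mem_sup hα ⟨f a, rfl⟩

theorem schreier_is_strong_point_general
    {A B : Type*} [AddMonoid A] [AddMonoid B]
    (f : A →+ B) (s : B →+ A)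
    (hSch : ∀ a : A, ∃! α : A, f α = 0 ∧ a = α + s (f a)) :
    ∀ M : AddSubmonoid A, (∀ x : A, f x = 0 → x ∈ M) → (∀ b : B, s b ∈ M) → M = ⊤ := by
  intro M hk hs
  have hker : AddMonoidHom.mker f ≤ M := fun x hx => hk x hx
  have hrange : AddMonoidHom.mrange s ≤ M := by
    rintro _ ⟨b, rfl⟩
    exact hs b
  rw [eq_top_iff, ← f.mker_sup_mrange_eq_top s fun a => (hSch a).exists]
  exact sup_le hker hrange

/-- every Schreier split epimorphism of monoids is a strong point: the
kernel inclusion `k` and the section `s` are jointly strongly epimorphic, i.e. the only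
submonoid of `A` containing the image of `k` and the image of `s` is `A` itself. -/
theorem schreier_is_strong_point
    {A B : Type*} [AddMonoid A] [AddMonoid B]
    (f : A →+ B) (s : B →+ A) (hfs : ∀ b : B, f (s b) = b)
    (hSch : ∀ a : A, ∃! α : A, f α = 0 ∧ a = α + s (f a)) :
    ∀ M : AddSubmonoid A, (∀ x : A, f x = 0 → x ∈ M) → (∀ b : B, s b ∈ M) → M = ⊤ :=
  schreier_is_strong_point_general f s hSch
end

section
/- The Split Short Five Lemma holds for Schreier split epimorphisms of monoids: given a morphism (g, h) of Schreier split epimorphisms from (f : A → B, s) to (f' : A' → B', s') (i.e., monoid homomorphisms g : A → A', h : B → B' with h ∘ f = f' ∘ g and g ∘ s = s' ∘ h), if h is an isomorphism and the restriction of g to the kernels, ker f → ker f', is an isomorphism, then g is an isomorphism. -/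
/-!
Write `a = α + s (f a)` with `f α = 0`. The morphism `(g, h)` carries this to the decomposition
`g a = g α + s' (f' (g a))` with `f' (g α) = 0`. If `g a₁ = g a₂`, then `f a₁ = f a₂` because `h`
is injective, and uniqueness of the decomposition in `A'` gives `g α₁ = g α₂`, hence `α₁ = α₂`.
Conversely `a' = α' + s' (f' a')` is the image of `α + s b`, where `g α = α'` and `h b = f' a'`.
-/

namespace SchreierSplitEpi

open Function

variable {A B A' B' : Type*} [AddMonoid A] [AddMonoid B] [AddMonoid A'] [AddMonoid B']
  {f : A →+ B} {s : B →+ A} {f' : A' →+ B'} {s' : B' →+ A'} {g : A →+ A'} {h : B →+ B'}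

theorem map_mem_ker (hsq1 : ∀ a : A, h (f a) = f' (g a)) {α : A} (hα : f α = 0) :
    f' (g α) = 0 := by
  rw [← hsq1, hα, map_zero]

theorem map_eq_add_section (hsq1 : ∀ a : A, h (f a) = f' (g a))
    (hsq2 : ∀ b : B, g (s b) = s' (h b)) {a α : A} (ha : a = α + s (f a)) :
    g a = g α + s' (f' (g a)) := by
  conv_lhs => rw [ha]
  rw [map_add, hsq2, hsq1]

theorem injective_of_injective_on_ker
    (hSch : ∀ a : A, ∃ α : A, f α = 0 ∧ a = α + s (f a))
    (hSch' : ∀ a : A', ∃! α : A', f' α = 0 ∧ a = α + s' (f' a))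
    (hsq1 : ∀ a : A, h (f a) = f' (g a)) (hsq2 : ∀ b : B, g (s b) = s' (h b))
    (hinj : Injective h)
    (hker_inj : ∀ x₁ x₂ : A, f x₁ = 0 → f x₂ = 0 → g x₁ = g x₂ → x₁ = x₂) :
    Injective g := by
  intro a₁ a₂ hg
  have hf : f a₁ = f a₂ := hinj (by rw [hsq1, hsq1, hg])
  obtain ⟨α₁, hα₁, ha₁⟩ := hSch a₁
  obtain ⟨α₂, hα₂, ha₂⟩ := hSch a₂
  have hgα : g α₁ = g α₂ :=
    (hSch' (g a₁)).unique ⟨map_mem_ker hsq1 hα₁, map_eq_add_section hsq1 hsq2 ha₁⟩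
      ⟨map_mem_ker hsq1 hα₂, hg ▸ map_eq_add_section hsq1 hsq2 ha₂⟩
  calc a₁ = α₁ + s (f a₁) := ha₁
    _ = α₂ + s (f a₂) := by rw [hker_inj _ _ hα₁ hα₂ hgα, hf]
    _ = a₂ := ha₂.symm

theorem surjective_of_surjective_on_ker
    (hSch' : ∀ a : A', ∃ α : A', f' α = 0 ∧ a = α + s' (f' a))
    (hsq2 : ∀ b : B, g (s b) = s' (h b)) (hsurj : Surjective h)
    (hker_surj : ∀ y : A', f' y = 0 → ∃ x : A, f x = 0 ∧ g x = y) :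
    Surjective g := by
  intro a'
  obtain ⟨α', hα', ha'⟩ := hSch' a'
  obtain ⟨b, hb⟩ := hsurj (f' a')
  obtain ⟨α, -, hα⟩ := hker_surj α' hα'
  exact ⟨α + s b, by rw [map_add, hsq2, hb, hα, ← ha']⟩

end SchreierSplitEpi

open SchreierSplitEpi in
theorem split_short_five_lemma_schreier_general
    {A B A' B' : Type*} [AddMonoid A] [AddMonoid B] [AddMonoid A'] [AddMonoid B']
    (f : A →+ B) (s : B →+ A)
    (hSch : ∀ a : A, ∃! α : A, f α = 0 ∧ a = α + s (f a))
    (f' : A' →+ B') (s' : B' →+ A')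
    (hSch' : ∀ a : A', ∃! α : A', f' α = 0 ∧ a = α + s' (f' a))
    (g : A →+ A') (h : B →+ B')
    (hsq1 : ∀ a : A, h (f a) = f' (g a))
    (hsq2 : ∀ b : B, g (s b) = s' (h b))
    (hbij : Function.Bijective h)
    (hker_inj : ∀ x₁ x₂ : A, f x₁ = 0 → f x₂ = 0 → g x₁ = g x₂ → x₁ = x₂)
    (hker_surj : ∀ y : A', f' y = 0 → ∃ x : A, f x = 0 ∧ g x = y) :
    Function.Bijective g :=
  ⟨injective_of_injective_on_ker (fun a => (hSch a).exists) hSch' hsq1 hsq2 hbij.1 hker_inj,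
    surjective_of_surjective_on_ker (fun a => (hSch' a).exists) hsq2 hbij.2 hker_surj⟩

/-- the Split Short Five Lemma for Schreier split epimorphisms of monoids:
if `(g, h)` is a morphism of Schreier split epimorphisms, `h` is an isomorphism and the
restriction of `g` to the kernels is an isomorphism, then `g` is an isomorphism. -/
theorem split_short_five_lemma_schreier
    {A B A' B' : Type*} [AddMonoid A] [AddMonoid B] [AddMonoid A'] [AddMonoid B']
    (f : A →+ B) (s : B →+ A) (hfs : ∀ b : B, f (s b) = b)
    (hSch : ∀ a : A, ∃! α : A, f α = 0 ∧ a = α + s (f a))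
    (f' : A' →+ B') (s' : B' →+ A') (hfs' : ∀ b : B', f' (s' b) = b)
    (hSch' : ∀ a : A', ∃! α : A', f' α = 0 ∧ a = α + s' (f' a))
    (g : A →+ A') (h : B →+ B')
    (hsq1 : ∀ a : A, h (f a) = f' (g a))
    (hsq2 : ∀ b : B, g (s b) = s' (h b))
    (hbij : Function.Bijective h)
    (hker_inj : ∀ x₁ x₂ : A, f x₁ = 0 → f x₂ = 0 → g x₁ = g x₂ → x₁ = x₂)
    (hker_surj : ∀ y : A', f' y = 0 → ∃ x : A, f x = 0 ∧ g x = y) :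
    Function.Bijective g :=
  split_short_five_lemma_schreier_general f s hSch f' s' hSch' g h hsq1 hsq2 hbij hker_inj hker_surj
end

section
/- If B is a (unital or non-unital) ring with B ≠ 0, regarded as a semiring, then every split epimorphism of semirings with codomain B is a Schreier split epimorphism. -/
/-! When the codomain's additive monoid is a group, the kernel component of `a` is forced:
adding `s (-f a)` to `a = α + s (f a)` cancels the section part, so `α = a + s (-f a)`, and
this element does lie in the kernel because `f ∘ s = id`. -/

section

variable {A B : Type*} [AddCommMonoid A] [AddGroup B] (f : A →+ B) (s : B →+ A)

theorem AddMonoidHom.eq_add_map_neg_of_eq_add_map {a α : A} (h : a = α + s (f a)) :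
    α = a + s (-f a) :=
  calc α = α + s (f a + -f a) := by rw [add_neg_cancel, map_zero, add_zero]
    _ = a + s (-f a) := by rw [map_add, ← add_assoc, ← h]

theorem AddMonoidHom.map_add_map_neg_eq_zero (hfs : ∀ b, f (s b) = b) (a : A) :
    f (a + s (-f a)) = 0 := by
  rw [map_add, hfs, add_neg_cancel]

theorem AddMonoidHom.existsUnique_ker_add_map_of_section (hfs : ∀ b, f (s b) = b) (a : A) :
    ∃! α : A, f α = 0 ∧ a = α + s (f a) := by
  refine ⟨a + s (-f a), ⟨f.map_add_map_neg_eq_zero s hfs a, ?_⟩, ?_⟩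
  · rw [add_assoc, ← map_add, neg_add_cancel, map_zero, add_zero]
  · rintro α ⟨-, ha⟩
    exact f.eq_add_map_neg_of_eq_add_map s ha

end

theorem split_epi_over_ring_is_schreier_general
    {A B : Type*} [NonUnitalSemiring A] [NonUnitalRing B]
    (f : A →ₙ+* B) (s : B →ₙ+* A) (hfs : ∀ b : B, f (s b) = b) :
    ∀ a : A, ∃! α : A, f α = 0 ∧ a = α + s (f a) :=
  (f : A →+ B).existsUnique_ker_add_map_of_section s hfs

/-- if `B` is a (possibly non-unital) ring with `B ≠ 0`, regarded as a
semiring, then every split epimorphism of semirings with codomain `B` is a Schreier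
split epimorphism. -/
theorem split_epi_over_ring_is_schreier
    {A B : Type*} [NonUnitalSemiring A] [NonUnitalRing B]
    (hB : ∃ b : B, b ≠ 0)
    (f : A →ₙ+* B) (s : B →ₙ+* A) (hfs : ∀ b : B, f (s b) = b) :
    ∀ a : A, ∃! α : A, f α = 0 ∧ a = α + s (f a) :=
  split_epi_over_ring_is_schreier_general f s hfs
end

section
/- Let p : D → B with section s : B → D be a Schreier split epimorphism of semirings, and let f : A → D and g : C → D be morphisms of Schreier points over B, i.e., there are Schreier split epimorphisms p' : A → B with section s' and p'' : C → B with section s'' satisfying p ∘ f = p', f ∘ s' = s, p ∘ g = p'', g ∘ s'' = s. If the subsemiring of D generated by f(A) ∪ g(C) is all of D, then the subsemiring of ker p generated by f(ker p') ∪ g(ker p'') is all of ker p. -/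
/-- the key computation for `S`-algebraic coherence of semirings: given
morphisms `f : A → D`, `g : C → D` of Schreier points over `B`, if the subsemiring of
`D` generated by `f(A) ∪ g(C)` is all of `D`, then the subsemiring of `ker p` generated
by `f(ker p') ∪ g(ker p'')` is all of `ker p`. -/
theorem schreier_kernel_functor_preserves_joint_generation
    {A C D B : Type*} [NonUnitalSemiring A] [NonUnitalSemiring C]
    [NonUnitalSemiring D] [NonUnitalSemiring B]
    (p : D →ₙ+* B) (s : B →ₙ+* D) (hps : ∀ b : B, p (s b) = b)
    (hSch : ∀ d : D, ∃! δ : D, p δ = 0 ∧ d = δ + s (p d))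
    (p' : A →ₙ+* B) (s' : B →ₙ+* A) (hps' : ∀ b : B, p' (s' b) = b)
    (hSch' : ∀ a : A, ∃! α : A, p' α = 0 ∧ a = α + s' (p' a))
    (p'' : C →ₙ+* B) (s'' : B →ₙ+* C) (hps'' : ∀ b : B, p'' (s'' b) = b)
    (hSch'' : ∀ c : C, ∃! γ : C, p'' γ = 0 ∧ c = γ + s'' (p'' c))
    (f : A →ₙ+* D) (g : C →ₙ+* D)
    (hf1 : ∀ a : A, p (f a) = p' a) (hf2 : ∀ b : B, f (s' b) = s b)
    (hg1 : ∀ c : C, p (g c) = p'' c) (hg2 : ∀ b : B, g (s'' b) = s b)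
    (hgen : NonUnitalSubsemiring.closure (Set.range f ∪ Set.range g) = ⊤) :
    ∀ d : D, p d = 0 →
      d ∈ NonUnitalSubsemiring.closure
            (f '' {a : A | p' a = 0} ∪ g '' {c : C | p'' c = 0}) := by
  intro d hd0
  set K := NonUnitalSubsemiring.closure
      (f '' {a : A | p' a = 0} ∪ g '' {c : C | p'' c = 0}) with hK
  -- K is closed under multiplication by elements of the form `s b` on both sides
  have hKs : ∀ b : B, ∀ x ∈ K, x * s b ∈ K ∧ s b * x ∈ K := by
    intro b x hx
    induction hx using NonUnitalSubsemiring.closure_induction with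
    | mem y hy =>
      rcases hy with ⟨a, ha, rfl⟩ | ⟨c, hc, rfl⟩
      · constructor
        · rw [← hf2 b, ← map_mul]
          exact NonUnitalSubsemiring.subset_closure
            (Or.inl ⟨a * s' b, by simp [Set.mem_setOf_eq] at ha ⊢; simp [ha], rfl⟩)
        · rw [← hf2 b, ← map_mul]
          exact NonUnitalSubsemiring.subset_closure
            (Or.inl ⟨s' b * a, by simp [Set.mem_setOf_eq] at ha ⊢; simp [ha], rfl⟩)
      · constructor
        · rw [← hg2 b, ← map_mul]
          exact NonUnitalSubsemiring.subset_closure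
            (Or.inr ⟨c * s'' b, by simp [Set.mem_setOf_eq] at hc ⊢; simp [hc], rfl⟩)
        · rw [← hg2 b, ← map_mul]
          exact NonUnitalSubsemiring.subset_closure
            (Or.inr ⟨s'' b * c, by simp [Set.mem_setOf_eq] at hc ⊢; simp [hc], rfl⟩)
    | zero =>
      exact ⟨by rw [zero_mul]; exact zero_mem K, by rw [mul_zero]; exact zero_mem K⟩
    | add x y hx hy ihx ihy =>
      exact ⟨by rw [add_mul]; exact add_mem ihx.1 ihy.1,
             by rw [mul_add]; exact add_mem ihx.2 ihy.2⟩
    | mul x y hx hy ihx ihy =>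
      exact ⟨by rw [mul_assoc]; exact mul_mem hx ihy.1,
             by rw [← mul_assoc]; exact mul_mem ihx.2 hy⟩
  -- the subsemiring of elements whose Schreier kernel part lies in K
  let S : NonUnitalSubsemiring D :=
    { carrier := {d : D | ∃ δ ∈ K, p δ = 0 ∧ d = δ + s (p d)}
      zero_mem' := ⟨0, zero_mem K, map_zero p, by simp⟩
      add_mem' := by
        rintro x y ⟨δ₁, h₁, hp₁, hd₁⟩ ⟨δ₂, h₂, hp₂, hd₂⟩
        refine ⟨δ₁ + δ₂, add_mem h₁ h₂, by simp [hp₁, hp₂], ?_⟩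
        rw [map_add, map_add]
        conv_lhs => rw [hd₁, hd₂]
        abel
      mul_mem' := by
        rintro x y ⟨δ₁, h₁, hp₁, hd₁⟩ ⟨δ₂, h₂, hp₂, hd₂⟩
        refine ⟨δ₁ * δ₂ + δ₁ * s (p y) + s (p x) * δ₂,
          add_mem (add_mem (mul_mem h₁ h₂) ((hKs (p y) δ₁ h₁).1))
            ((hKs (p x) δ₂ h₂).2), ?_, ?_⟩
        · simp [hp₁, hp₂, hps]
        · rw [map_mul, map_mul]
          conv_lhs => rw [hd₁, hd₂]
          rw [add_mul, mul_add, mul_add]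
          abel }
  have hfS : Set.range f ⊆ S := by
    rintro _ ⟨a, rfl⟩
    obtain ⟨α, ⟨hα0, hα⟩, -⟩ := hSch' a
    refine ⟨f α, NonUnitalSubsemiring.subset_closure (Or.inl ⟨α, hα0, rfl⟩),
      by rw [hf1, hα0], ?_⟩
    rw [hf1]
    conv_lhs => rw [hα]
    rw [map_add, hf2]
  have hgS : Set.range g ⊆ S := by
    rintro _ ⟨c, rfl⟩
    obtain ⟨γ, ⟨hγ0, hγ⟩, -⟩ := hSch'' c
    refine ⟨g γ, NonUnitalSubsemiring.subset_closure (Or.inr ⟨γ, hγ0, rfl⟩),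
      by rw [hg1, hγ0], ?_⟩
    rw [hg1]
    conv_lhs => rw [hγ]
    rw [map_add, hg2]
  have hS : d ∈ S := by
    have h := NonUnitalSubsemiring.closure_le.mpr (Set.union_subset hfS hgS)
    rw [hgen] at h
    exact h trivial
  obtain ⟨δ, hδK, hpδ, hdδ⟩ := hS
  rw [hd0, map_zero, add_zero] at hdδ
  rwa [hdδ]
end
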